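/- arXiv:1605.00641 — 5 statements merged into one kernel-verified Lean document; each statement's English description precedes it below -/
import Mathlib

section
/- For 1 ≤ p < ∞ with p ≠ 2, two vectors f, g ∈ ℓᵖ are disjointly supported if and only if 2(‖f‖ₚᵖ + ‖g‖ₚᵖ) = ‖f + g‖ₚᵖ + ‖f − g‖ₚᵖ. -/
open scoped ENNReal
open Filter

noncomputable section

abbrev ellp (p : ℝ≥0∞) := lp (fun _ : ℕ => ℂ) p

/-- the standard basis vector `e n` -/
noncomputable def stdb (p : ℝ≥0∞) (n : ℕ) : ellp p := lp.single p n 1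

/-- `f` and `g` are disjointly supported -/
def DisjSupp {p : ℝ≥0∞} (f g : ellp p) : Prop := ∀ n : ℕ, f n = 0 ∨ g n = 0

/-- the subvector relation: `f = g · χ_A` for some `A ⊆ ℕ` -/
def Subvec {p : ℝ≥0∞} (f g : ellp p) : Prop :=
  ∃ A : Set ℕ, ⇑f = A.indicator ⇑g

/-! ### Auxiliary real power inequalities -/

lemma aux_rpow_strict_subadd {x y r : ℝ} (hx : 0 < x) (hy : 0 < y)
    (hr1 : r < 1) : (x + y) ^ r < x ^ r + y ^ r := by
  have hs : 0 < x + y := by linarith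
  have hxs : x / (x + y) < 1 := by rw [div_lt_one hs]; linarith
  have hys : y / (x + y) < 1 := by rw [div_lt_one hs]; linarith
  have h1 : x / (x + y) < (x / (x + y)) ^ r := by
    have := Real.rpow_lt_rpow_of_exponent_gt (by positivity) hxs hr1
    rwa [Real.rpow_one] at this
  have h2 : y / (x + y) < (y / (x + y)) ^ r := by
    have := Real.rpow_lt_rpow_of_exponent_gt (by positivity) hys hr1
    rwa [Real.rpow_one] at this
  rw [Real.div_rpow hx.le hs.le] at h1
  rw [Real.div_rpow hy.le hs.le] at h2
  have hsum : x / (x + y) + y / (x + y) = 1 := by field_simp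
  have hsr : 0 < (x + y) ^ r := Real.rpow_pos_of_pos hs r
  have h3 : 1 < x ^ r / (x + y) ^ r + y ^ r / (x + y) ^ r := by
    rw [← hsum]; exact add_lt_add h1 h2
  calc (x + y) ^ r = 1 * (x + y) ^ r := (one_mul _).symm
    _ < (x ^ r / (x + y) ^ r + y ^ r / (x + y) ^ r) * (x + y) ^ r :=
        mul_lt_mul_of_pos_right h3 hsr
    _ = x ^ r + y ^ r := by field_simp

lemma aux_rpow_strict_superadd {x y r : ℝ} (hx : 0 < x) (hy : 0 < y)
    (hr1 : 1 < r) : x ^ r + y ^ r < (x + y) ^ r := by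
  have hs : 0 < x + y := by linarith
  have hxs : x / (x + y) < 1 := by rw [div_lt_one hs]; linarith
  have hys : y / (x + y) < 1 := by rw [div_lt_one hs]; linarith
  have h1 : (x / (x + y)) ^ r < x / (x + y) := by
    have := Real.rpow_lt_rpow_of_exponent_gt (x := x / (x+y)) (by positivity) hxs hr1
    rwa [Real.rpow_one] at this
  have h2 : (y / (x + y)) ^ r < y / (x + y) := by
    have := Real.rpow_lt_rpow_of_exponent_gt (x := y / (x+y)) (by positivity) hys hr1
    rwa [Real.rpow_one] at this
  rw [Real.div_rpow hx.le hs.le] at h1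
  rw [Real.div_rpow hy.le hs.le] at h2
  have hsum : x / (x + y) + y / (x + y) = 1 := by field_simp
  have hsr : 0 < (x + y) ^ r := Real.rpow_pos_of_pos hs r
  have h3 : x ^ r / (x + y) ^ r + y ^ r / (x + y) ^ r < 1 := by
    rw [← hsum]; exact add_lt_add h1 h2
  calc x ^ r + y ^ r = (x ^ r / (x + y) ^ r + y ^ r / (x + y) ^ r) * (x + y) ^ r := by
        field_simp
    _ < 1 * (x + y) ^ r := mul_lt_mul_of_pos_right h3 hsr
    _ = (x + y) ^ r := one_mul _

lemma aux_rpow_concave2 {u v r : ℝ} (hu : 0 ≤ u) (hv : 0 ≤ v) (hr0 : 0 < r)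
    (hr1 : r ≤ 1) : u ^ r + v ^ r ≤ 2 * ((u + v) / 2) ^ r := by
  have hp : (1:ℝ) ≤ 1 / r := by rw [le_div_iff₀ hr0]; linarith
  have h := Real.arith_mean_le_rpow_mean (Finset.univ : Finset (Fin 2))
    ![1/2, 1/2] ![u ^ r, v ^ r]
    (by intro i _; fin_cases i <;> norm_num)
    (by norm_num [Fin.sum_univ_two])
    (by intro i _; fin_cases i <;> simp [Real.rpow_nonneg, hu, hv])
    hp
  have e1 : (u ^ r) ^ (1/r : ℝ) = u := by
    rw [← Real.rpow_mul hu, mul_one_div_cancel hr0.ne', Real.rpow_one]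
  have e2 : (v ^ r) ^ (1/r : ℝ) = v := by
    rw [← Real.rpow_mul hv, mul_one_div_cancel hr0.ne', Real.rpow_one]
  simp only [Fin.sum_univ_two, Matrix.cons_val_zero,
    Matrix.cons_val_one, Matrix.head_cons, e1, e2, one_div_one_div] at h
  have e : (1:ℝ)/2 * u + 1/2 * v = (u + v) / 2 := by ring
  rw [e] at h
  linarith

lemma aux_rpow_convex2 {u v r : ℝ} (hu : 0 ≤ u) (hv : 0 ≤ v)
    (hr1 : 1 ≤ r) : 2 * ((u + v) / 2) ^ r ≤ u ^ r + v ^ r := by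
  have h := Real.rpow_arith_mean_le_arith_mean_rpow (Finset.univ : Finset (Fin 2))
    ![1/2, 1/2] ![u, v]
    (by intro i _; fin_cases i <;> norm_num)
    (by norm_num [Fin.sum_univ_two])
    (by intro i _; fin_cases i <;> simp [hu, hv])
    hr1
  simp only [Fin.sum_univ_two, Matrix.cons_val_zero,
    Matrix.cons_val_one, Matrix.head_cons] at h
  have e : (1:ℝ)/2 * u + 1/2 * v = (u + v) / 2 := by ring
  rw [e] at h
  linarith

lemma aux_sq_rpow {t q : ℝ} (ht : 0 ≤ t) : (t ^ (2:ℕ)) ^ (q/2 : ℝ) = t ^ q := by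
  rw [← Real.rpow_natCast t 2, ← Real.rpow_mul ht]; ring_nf

lemma aux_par (a b : ℂ) :
    ‖a + b‖ ^ (2:ℕ) + ‖a - b‖ ^ (2:ℕ) = 2 * (‖a‖ ^ (2:ℕ) + ‖b‖ ^ (2:ℕ)) := by
  have := parallelogram_law_with_norm ℝ a b
  simpa [pow_two] using this

/-! ### Pointwise Hanner–Lamperti facts on ℂ -/

lemma ptwise_eq {q : ℝ} (hq0 : 0 < q) {a b : ℂ} (h : a = 0 ∨ b = 0) :
    ‖a + b‖ ^ q + ‖a - b‖ ^ q = 2 * (‖a‖ ^ q + ‖b‖ ^ q) := by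
  rcases h with rfl | rfl <;>
    simp [Real.zero_rpow hq0.ne', norm_neg] <;> ring

lemma ptwise_lt {q : ℝ} (hq0 : 0 < q) (hq2 : q < 2) {a b : ℂ} (ha : a ≠ 0) (hb : b ≠ 0) :
    ‖a + b‖ ^ q + ‖a - b‖ ^ q < 2 * (‖a‖ ^ q + ‖b‖ ^ q) := by
  set r : ℝ := q / 2 with hr
  have hr0 : 0 < r := by positivity
  have hr1 : r < 1 := by rw [hr]; linarith
  have hx : (0:ℝ) < ‖a‖ ^ (2:ℕ) := pow_pos (norm_pos_iff.mpr ha) 2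
  have hy : (0:ℝ) < ‖b‖ ^ (2:ℕ) := pow_pos (norm_pos_iff.mpr hb) 2
  have hu : (0:ℝ) ≤ ‖a + b‖ ^ (2:ℕ) := by positivity
  have hv : (0:ℝ) ≤ ‖a - b‖ ^ (2:ℕ) := by positivity
  calc ‖a + b‖ ^ q + ‖a - b‖ ^ q
      = (‖a + b‖ ^ (2:ℕ)) ^ r + (‖a - b‖ ^ (2:ℕ)) ^ r := by
        rw [aux_sq_rpow (norm_nonneg _), aux_sq_rpow (norm_nonneg _)]
    _ ≤ 2 * ((‖a + b‖ ^ (2:ℕ) + ‖a - b‖ ^ (2:ℕ)) / 2) ^ r :=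
        aux_rpow_concave2 hu hv hr0 hr1.le
    _ = 2 * (‖a‖ ^ (2:ℕ) + ‖b‖ ^ (2:ℕ)) ^ r := by
        rw [aux_par]; ring_nf
    _ < 2 * ((‖a‖ ^ (2:ℕ)) ^ r + (‖b‖ ^ (2:ℕ)) ^ r) := by
        have := aux_rpow_strict_subadd hx hy hr1
        linarith
    _ = 2 * (‖a‖ ^ q + ‖b‖ ^ q) := by
        rw [aux_sq_rpow (norm_nonneg _), aux_sq_rpow (norm_nonneg _)]

lemma ptwise_gt {q : ℝ} (hq2 : 2 < q) {a b : ℂ} (ha : a ≠ 0) (hb : b ≠ 0) :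
    2 * (‖a‖ ^ q + ‖b‖ ^ q) < ‖a + b‖ ^ q + ‖a - b‖ ^ q := by
  set r : ℝ := q / 2 with hr
  have hr1 : 1 < r := by rw [hr]; linarith
  have hx : (0:ℝ) < ‖a‖ ^ (2:ℕ) := pow_pos (norm_pos_iff.mpr ha) 2
  have hy : (0:ℝ) < ‖b‖ ^ (2:ℕ) := pow_pos (norm_pos_iff.mpr hb) 2
  have hu : (0:ℝ) ≤ ‖a + b‖ ^ (2:ℕ) := by positivity
  have hv : (0:ℝ) ≤ ‖a - b‖ ^ (2:ℕ) := by positivity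
  calc 2 * (‖a‖ ^ q + ‖b‖ ^ q)
      = 2 * ((‖a‖ ^ (2:ℕ)) ^ r + (‖b‖ ^ (2:ℕ)) ^ r) := by
        rw [aux_sq_rpow (norm_nonneg _), aux_sq_rpow (norm_nonneg _)]
    _ < 2 * (‖a‖ ^ (2:ℕ) + ‖b‖ ^ (2:ℕ)) ^ r := by
        have := aux_rpow_strict_superadd hx hy hr1
        linarith
    _ = 2 * ((‖a + b‖ ^ (2:ℕ) + ‖a - b‖ ^ (2:ℕ)) / 2) ^ r := by
        rw [aux_par]; ring_nf
    _ ≤ (‖a + b‖ ^ (2:ℕ)) ^ r + (‖a - b‖ ^ (2:ℕ)) ^ r :=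
        aux_rpow_convex2 hu hv hr1.le
    _ = ‖a + b‖ ^ q + ‖a - b‖ ^ q := by
        rw [aux_sq_rpow (norm_nonneg _), aux_sq_rpow (norm_nonneg _)]

/-- Hanner–Lamperti characterization of disjoint support in `ℓᵖ`, `p ≠ 2`. -/
theorem stmt_1 (p : ℝ≥0∞) (hp1 : 1 ≤ p) (hptop : p ≠ ∞) (hp2 : p ≠ 2)
    (f g : ellp p) :
    DisjSupp f g ↔
      2 * (‖f‖ ^ p.toReal + ‖g‖ ^ p.toReal) =
        ‖f + g‖ ^ p.toReal + ‖f - g‖ ^ p.toReal := by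
  set q : ℝ := p.toReal with hqdef
  have hq1 : 1 ≤ q := by
    have := ENNReal.toReal_mono hptop hp1
    simpa using this
  have hq0 : 0 < q := lt_of_lt_of_le one_pos hq1
  have hq2 : q ≠ 2 := by
    intro h
    apply hp2
    have : p.toReal = (2 : ℝ≥0∞).toReal := by simpa using h
    exact (ENNReal.toReal_eq_toReal_iff' hptop (by norm_num)).mp this
  -- summability
  have hsf : Summable fun n => ‖f n‖ ^ q := (lp.memℓp f).summable hq0
  have hsg : Summable fun n => ‖g n‖ ^ q := (lp.memℓp g).summable hq0
  have hsfg : Summable fun n => ‖f n + g n‖ ^ q := by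
    have := (lp.memℓp (f + g)).summable hq0
    simpa [lp.coeFn_add] using this
  have hsfg' : Summable fun n => ‖f n - g n‖ ^ q := by
    have := (lp.memℓp (f - g)).summable hq0
    simpa [lp.coeFn_sub] using this
  -- rewrite norms as tsums
  have hF : 2 * (‖f‖ ^ q + ‖g‖ ^ q) = ∑' n, (2 * (‖f n‖ ^ q + ‖g n‖ ^ q)) := by
    rw [lp.norm_rpow_eq_tsum hq0 f, lp.norm_rpow_eq_tsum hq0 g,
      ← Summable.tsum_add hsf hsg, ← tsum_mul_left]
  have hG : ‖f + g‖ ^ q + ‖f - g‖ ^ q = ∑' n, (‖f n + g n‖ ^ q + ‖f n - g n‖ ^ q) := by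
    rw [lp.norm_rpow_eq_tsum hq0 (f + g), lp.norm_rpow_eq_tsum hq0 (f - g)]
    simp only [lp.coeFn_add, lp.coeFn_sub, Pi.add_apply, Pi.sub_apply]
    rw [← Summable.tsum_add hsfg hsfg']
  rw [hF, hG]
  have hsF : Summable fun n => 2 * (‖f n‖ ^ q + ‖g n‖ ^ q) := (hsf.add hsg).mul_left 2
  have hsG : Summable fun n => ‖f n + g n‖ ^ q + ‖f n - g n‖ ^ q := hsfg.add hsfg'
  constructor
  · intro hd
    exact (tsum_congr fun n => (ptwise_eq hq0 (hd n)).symm).symm ▸ rfl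
  · intro heq
    intro n
    by_contra hcon
    push_neg at hcon
    obtain ⟨hfn, hgn⟩ := hcon
    rcases lt_or_gt_of_ne hq2 with hlt | hgt
    · -- q < 2 : G ≤ F pointwise, strict at n
      have hle : ∀ m, ‖f m + g m‖ ^ q + ‖f m - g m‖ ^ q ≤ 2 * (‖f m‖ ^ q + ‖g m‖ ^ q) := by
        intro m
        by_cases h : f m = 0 ∨ g m = 0
        · exact (ptwise_eq hq0 h).le
        · push_neg at h
          exact (ptwise_lt hq0 hlt h.1 h.2).le
      have hstrict := ptwise_lt hq0 hlt hfn hgn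
      have := Summable.tsum_lt_tsum hle hstrict hsG hsF
      linarith
    · have hle : ∀ m, 2 * (‖f m‖ ^ q + ‖g m‖ ^ q) ≤ ‖f m + g m‖ ^ q + ‖f m - g m‖ ^ q := by
        intro m
        by_cases h : f m = 0 ∨ g m = 0
        · exact (ptwise_eq hq0 h).ge
        · push_neg at h
          exact (ptwise_gt hgt h.1 h.2).le
      have hstrict := ptwise_gt hgt hfn hgn
      have := Summable.tsum_lt_tsum hle hstrict hsF hsG
      linarith
end
end

section
/- For complex numbers a and b and a real p ≥ 1 with p ≠ 2: if p < 2 then |a+b|ᵖ + |a−b|ᵖ ≤ 2(|a|ᵖ + |b|ᵖ), if p > 2 then |a+b|ᵖ + |a−b|ᵖ ≥ 2(|a|ᵖ + |b|ᵖ), and in either case equality holds if and only if a = 0 or b = 0. -/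
/-!
Put `r = p / 2` and apply `u ↦ u ^ r` to squared norms. By the parallelogram law the squares
`‖a + b‖²`, `‖a - b‖²` have mean `‖a‖² + ‖b‖²`, so Jensen's inequality for the concave (`r < 1`)
or convex (`r > 1`) power compares `‖a + b‖ᵖ + ‖a - b‖ᵖ` with `2 (‖a‖² + ‖b‖²) ^ r`, and the strict
sub- resp. superadditivity of `u ↦ u ^ r` on positive reals compares that with `2 (‖a‖ᵖ + ‖b‖ᵖ)`,
strictly unless `a = 0` or `b = 0`.
-/

namespace Real

variable {r s t : ℝ}

lemma sq_rpow_div_two (hs : 0 ≤ s) : (s ^ 2) ^ (r / 2) = s ^ r := by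
  rw [rpow_div_two_eq_sqrt r (sq_nonneg s), sqrt_sq hs]

lemma mul_rpow_sub_one (hs : s ≠ 0) (r : ℝ) : s * s ^ (r - 1) = s ^ r := by
  rw [rpow_sub_one hs, mul_div_cancel₀ _ hs]

lemma rpow_add_lt_add_rpow (hr : r < 1) (hs : 0 < s) (ht : 0 < t) :
    (s + t) ^ r < s ^ r + t ^ r := by
  have key : ∀ u, 0 < u → u < s + t → u * (s + t) ^ (r - 1) < u ^ r := fun u hu hut => by
    rw [← mul_rpow_sub_one hu.ne']
    exact mul_lt_mul_of_pos_left (rpow_lt_rpow_of_neg hu hut (by linarith)) hu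
  calc (s + t) ^ r = s * (s + t) ^ (r - 1) + t * (s + t) ^ (r - 1) := by
        rw [← add_mul, mul_rpow_sub_one (by positivity)]
    _ < s ^ r + t ^ r := add_lt_add (key s hs (by linarith)) (key t ht (by linarith))

lemma add_rpow_lt_rpow_add (hr : 1 < r) (hs : 0 < s) (ht : 0 < t) :
    s ^ r + t ^ r < (s + t) ^ r := by
  have key : ∀ u, 0 < u → u < s + t → u ^ r < u * (s + t) ^ (r - 1) := fun u hu hut => by
    rw [← mul_rpow_sub_one hu.ne']
    exact mul_lt_mul_of_pos_left (rpow_lt_rpow hu.le hut (by linarith)) hu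
  calc s ^ r + t ^ r < s * (s + t) ^ (r - 1) + t * (s + t) ^ (r - 1) :=
        add_lt_add (key s hs (by linarith)) (key t ht (by linarith))
    _ = (s + t) ^ r := by rw [← add_mul, mul_rpow_sub_one (by positivity)]

lemma add_rpow_le_two_mul_half_add_rpow (hr₀ : 0 ≤ r) (hr₁ : r ≤ 1) (hs : 0 ≤ s) (ht : 0 ≤ t) :
    s ^ r + t ^ r ≤ 2 * ((s + t) / 2) ^ r := by
  have h := (concaveOn_rpow hr₀ hr₁).2 hs ht (by norm_num : (0 : ℝ) ≤ 1 / 2)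
    (by norm_num : (0 : ℝ) ≤ 1 / 2) (by norm_num)
  simp only [smul_eq_mul] at h
  rw [show 1 / 2 * s + 1 / 2 * t = (s + t) / 2 by ring] at h
  linarith

lemma two_mul_half_add_rpow_le_add_rpow (hr : 1 ≤ r) (hs : 0 ≤ s) (ht : 0 ≤ t) :
    2 * ((s + t) / 2) ^ r ≤ s ^ r + t ^ r := by
  have h := (convexOn_rpow hr).2 hs ht (by norm_num : (0 : ℝ) ≤ 1 / 2)
    (by norm_num : (0 : ℝ) ≤ 1 / 2) (by norm_num)
  simp only [smul_eq_mul] at h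
  rw [show 1 / 2 * s + 1 / 2 * t = (s + t) / 2 by ring] at h
  linarith

end Real

open Real

lemma norm_add_rpow_add_norm_sub_rpow_lt (𝕜 : Type*) {E : Type*} [RCLike 𝕜]
    [NormedAddCommGroup E] [InnerProductSpace 𝕜 E] {p : ℝ} (hp₀ : 0 < p) (hp₂ : p < 2) {x y : E}
    (hx : x ≠ 0) (hy : y ≠ 0) :
    ‖x + y‖ ^ p + ‖x - y‖ ^ p < 2 * (‖x‖ ^ p + ‖y‖ ^ p) := by
  simp only [← sq_rpow_div_two (norm_nonneg _)]
  calc (‖x + y‖ ^ 2) ^ (p / 2) + (‖x - y‖ ^ 2) ^ (p / 2)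
      ≤ 2 * ((‖x + y‖ ^ 2 + ‖x - y‖ ^ 2) / 2) ^ (p / 2) :=
        add_rpow_le_two_mul_half_add_rpow (by linarith) (by linarith) (by positivity)
          (by positivity)
    _ = 2 * (‖x‖ ^ 2 + ‖y‖ ^ 2) ^ (p / 2) := by
        rw [parallelogram_law_with_norm 𝕜, mul_div_cancel_left₀ _ two_ne_zero]
    _ < 2 * ((‖x‖ ^ 2) ^ (p / 2) + (‖y‖ ^ 2) ^ (p / 2)) := by
        gcongr
        exact rpow_add_lt_add_rpow (by linarith) (by positivity) (by positivity)

lemma lt_norm_add_rpow_add_norm_sub_rpow (𝕜 : Type*) {E : Type*} [RCLike 𝕜]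
    [NormedAddCommGroup E] [InnerProductSpace 𝕜 E] {p : ℝ} (hp : 2 < p) {x y : E}
    (hx : x ≠ 0) (hy : y ≠ 0) :
    2 * (‖x‖ ^ p + ‖y‖ ^ p) < ‖x + y‖ ^ p + ‖x - y‖ ^ p := by
  simp only [← sq_rpow_div_two (norm_nonneg _)]
  calc 2 * ((‖x‖ ^ 2) ^ (p / 2) + (‖y‖ ^ 2) ^ (p / 2))
      < 2 * (‖x‖ ^ 2 + ‖y‖ ^ 2) ^ (p / 2) := by
        gcongr
        exact add_rpow_lt_rpow_add (by linarith) (by positivity) (by positivity)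
    _ = 2 * ((‖x + y‖ ^ 2 + ‖x - y‖ ^ 2) / 2) ^ (p / 2) := by
        rw [parallelogram_law_with_norm 𝕜, mul_div_cancel_left₀ _ two_ne_zero]
    _ ≤ (‖x + y‖ ^ 2) ^ (p / 2) + (‖x - y‖ ^ 2) ^ (p / 2) :=
        two_mul_half_add_rpow_le_add_rpow (by linarith) (by positivity) (by positivity)

lemma norm_add_rpow_add_norm_sub_rpow_of_eq_zero_or {E : Type*} [SeminormedAddCommGroup E]
    {p : ℝ} (hp : p ≠ 0) {x y : E} (h : x = 0 ∨ y = 0) :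
    ‖x + y‖ ^ p + ‖x - y‖ ^ p = 2 * (‖x‖ ^ p + ‖y‖ ^ p) := by
  rcases h with rfl | rfl <;> simp [zero_rpow hp] <;> ring

/-- the scalar inequality underlying Lamperti's theorem. -/
theorem stmt_2 (p : ℝ) (hp1 : 1 ≤ p) (hp2 : p ≠ 2) (a b : ℂ) :
    (p < 2 →
      ‖a + b‖ ^ p + ‖a - b‖ ^ p ≤
        2 * (‖a‖ ^ p + ‖b‖ ^ p)) ∧
    (2 < p →
      2 * (‖a‖ ^ p + ‖b‖ ^ p) ≤
        ‖a + b‖ ^ p + ‖a - b‖ ^ p) ∧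
    (‖a + b‖ ^ p + ‖a - b‖ ^ p =
        2 * (‖a‖ ^ p + ‖b‖ ^ p) ↔ a = 0 ∨ b = 0) := by
  have hp0 : 0 < p := by linarith
  by_cases hab : a = 0 ∨ b = 0
  · have h := norm_add_rpow_add_norm_sub_rpow_of_eq_zero_or hp0.ne' hab
    exact ⟨fun _ => h.le, fun _ => h.ge, iff_of_true h hab⟩
  obtain ⟨ha, hb⟩ := not_or.1 hab
  rcases hp2.lt_or_gt with hlt | hgt
  · have h := norm_add_rpow_add_norm_sub_rpow_lt ℂ hp0 hlt ha hb
    exact ⟨fun _ => h.le, fun hgt => absurd hlt hgt.not_gt, iff_of_false h.ne hab⟩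
  · have h := lt_norm_add_rpow_add_norm_sub_rpow ℂ hgt ha hb
    exact ⟨fun hlt => absurd hlt hgt.not_gt, fun _ => h.le, iff_of_false h.ne' hab⟩
end

section
/- Let ϕ : S → ℓᵖ be a disintegration (injective, separating, summative, never zero, with linearly dense range, on a tree S ⊆ ℕ*), with 1 ≤ p < ∞ and p ≠ 2. If C ⊆ S is an almost norm-maximizing chain, then the ⪯-infimum of ϕ[C] exists, is either 0 or an atom, and equals the limit in the ℓᵖ norm of ϕ(ν) as ν traverses C in increasing order. -/
open scoped ENNReal
open Filter

noncomputable section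

/-- a tree is a prefix-closed set of finite sequences of naturals -/
def IsTree (S : Set (List ℕ)) : Prop := ∀ ν ∈ S, ∀ ν' : List ℕ, ν' <+: ν → ν' ∈ S

/-- `ν'` is a child of `ν` in `S` -/
def ChildIn (S : Set (List ℕ)) (ν ν' : List ℕ) : Prop :=
  ν' ∈ S ∧ ∃ m : ℕ, ν' = ν ++ [m]

/-- `ν` is a nonterminal node of `S` -/
def Nonterminal (S : Set (List ℕ)) (ν : List ℕ) : Prop := ∃ ν', ChildIn S ν ν'

/-- a disintegration of `ℓᵖ`: injective, never zero, separating, summative, with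
linearly dense range -/
structure Disintegration (p : ℝ≥0∞) [Fact (1 ≤ p)] (S : Set (List ℕ)) (φ : List ℕ → ellp p) : Prop where
  tree : IsTree S
  inj : Set.InjOn φ S
  nonzero : ∀ ν ∈ S, φ ν ≠ 0
  separating : ∀ ν ∈ S, ∀ ν' ∈ S, ¬ν <+: ν' → ¬ν' <+: ν → DisjSupp (φ ν) (φ ν')
  summative : ∀ ν ∈ S, Nonterminal S ν →
    HasSum (fun μ : {μ : List ℕ // ChildIn S ν μ} => φ μ.val) (φ ν)
  dense : Dense (Submodule.span ℂ (φ '' S) : Set (ellp p))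

/-- a chain with respect to the prefix (ancestor) order -/
def PrefixChain (C : Set (List ℕ)) : Prop := ∀ ν ∈ C, ∀ ν' ∈ C, ν <+: ν' ∨ ν' <+: ν

/-- an almost norm-maximizing chain -/
def ANMChain (p : ℝ≥0∞) (S : Set (List ℕ)) (φ : List ℕ → ellp p)
    (C : Set (List ℕ)) : Prop :=
  C ⊆ S ∧ PrefixChain C ∧ ∀ ν ∈ C, Nonterminal S ν →
    ∃ ν', ν' ∈ C ∧ ChildIn S ν ν' ∧ ∀ μ, ChildIn S ν μ →
      ‖φ μ‖ ^ p.toReal ≤ ‖φ ν'‖ ^ p.toReal + 2 ^ (-(ν.length : ℤ))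

/-- `g` is the greatest lower bound of `A` in the subvector order -/
def IsSubvecGLB {p : ℝ≥0∞} (g : ellp p) (A : Set (ellp p)) : Prop :=
  (∀ h ∈ A, Subvec g h) ∧ ∀ g', (∀ h ∈ A, Subvec g' h) → Subvec g' g

/-!
If `h ⪯ f` then `‖f - h‖ₚᵖ = ‖f‖ₚᵖ - ‖h‖ₚᵖ`, so along the `⪯`-decreasing chain `φ[C]` norm
convergence reduces to the monotone convergence of `‖φ(ν)‖ₚᵖ`; the limit `g` is the `⪯`-infimum
because `⪯` is closed in both arguments. If `g` had two support points `n ≠ m`, then every `φ(μ)`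
would either contain `g` (when `μ` lies below some node of `C`) or vanish on the support of `g`
(when `μ` is incomparable with some node of `C`; a node beyond all of `C` cannot exist, since a
maximal node of an almost norm-maximizing chain is terminal). The functional
`g m • eₙ* - g n • eₘ*` would then vanish on the dense span of `φ[S]`, yet not on `eₙ`.
-/

open scoped Topology

variable {p : ℝ≥0∞}

theorem subvec_iff {f g : ellp p} : Subvec f g ↔ ∀ n, f n = 0 ∨ f n = g n := by
  constructor
  · rintro ⟨A, hA⟩ n
    by_cases hn : n ∈ A <;> simp [hA, hn]
  · intro h
    refine ⟨{n | f n ≠ 0}, funext fun n => ?_⟩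
    rcases h n with hn | hn <;> by_cases hn' : f n = 0 <;> simp_all

theorem Subvec.refl (f : ellp p) : Subvec f f := subvec_iff.2 fun _ => Or.inr rfl

theorem Subvec.apply_eq {f g : ellp p} (h : Subvec f g) {n : ℕ} (hn : f n ≠ 0) : f n = g n :=
  (subvec_iff.1 h n).resolve_left hn

theorem Subvec.trans {f g h : ellp p} (hfg : Subvec f g) (hgh : Subvec g h) : Subvec f h :=
  subvec_iff.2 fun n => (em (f n = 0)).imp id fun hn =>
    (hfg.apply_eq hn).trans (hgh.apply_eq (hfg.apply_eq hn ▸ hn))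

instance : Std.Refl (Subvec (p := p)) := ⟨Subvec.refl⟩

section Normed

variable [Fact (1 ≤ p)]

theorem continuous_ellp_apply (n : ℕ) : Continuous fun f : ellp p => f n :=
  (lp.lipschitzWith_one_eval p n).continuous

theorem isClosed_setOf_subvec_left (g : ellp p) : IsClosed {f : ellp p | Subvec f g} := by
  simp only [subvec_iff, Set.ofPred_forall, Set.ofPred_or]
  exact isClosed_iInter fun n =>
    (isClosed_eq (continuous_ellp_apply n) continuous_const).union
      (isClosed_eq (continuous_ellp_apply n) continuous_const)

theorem isClosed_setOf_subvec_right (f : ellp p) : IsClosed {g : ellp p | Subvec f g} := by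
  simp only [subvec_iff, Set.ofPred_forall]
  refine isClosed_iInter fun n => ?_
  by_cases hn : f n = 0
  · simp [hn]
  · simpa [hn, eq_comm] using isClosed_eq (continuous_ellp_apply n) continuous_const

theorem subvec_of_hasSum {ι : Type*} {x : ι → ellp p} {y : ellp p} (hsum : HasSum x y)
    (hdisj : Pairwise fun i j => DisjSupp (x i) (x j)) (i : ι) : Subvec (x i) y := by
  refine subvec_iff.2 fun n => or_iff_not_imp_left.2 fun hn => ?_
  have hsum_n : HasSum (fun j => x j n) (y n) := (lp.evalCLM ℂ _ p n).hasSum hsum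
  exact (hasSum_single i fun j hj => ((hdisj hj n).resolve_right hn)).unique hsum_n

theorem Subvec.norm_rpow_add (hp : p ≠ ∞) {f g : ellp p} (h : Subvec f g) :
    ‖f‖ ^ p.toReal + ‖g - f‖ ^ p.toReal = ‖g‖ ^ p.toReal := by
  have hq : 0 < p.toReal := ENNReal.toReal_pos (zero_lt_one.trans_le Fact.out).ne' hp
  rw [lp.norm_rpow_eq_tsum hq, lp.norm_rpow_eq_tsum hq, lp.norm_rpow_eq_tsum hq,
    ← ((lp.memℓp f).summable hq).tsum_add ((lp.memℓp (g - f)).summable hq)]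
  refine tsum_congr fun n => ?_
  rw [lp.coeFn_sub, Pi.sub_apply]
  rcases subvec_iff.1 h n with hn | hn <;> simp [hn, Real.zero_rpow hq.ne']

theorem Subvec.norm_rpow_le (hp : p ≠ ∞) {f g : ellp p} (h : Subvec f g) :
    ‖f‖ ^ p.toReal ≤ ‖g‖ ^ p.toReal := by
  rw [← h.norm_rpow_add hp]
  exact le_add_of_nonneg_right (by positivity)

theorem Subvec.norm_sub_lt (hp : p ≠ ∞) {f g : ellp p} (h : Subvec f g) {ε : ℝ} (hε : 0 < ε)
    (hlt : ‖g‖ ^ p.toReal < ‖f‖ ^ p.toReal + ε ^ p.toReal) : ‖g - f‖ < ε := by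
  have hq : 0 < p.toReal := ENNReal.toReal_pos (zero_lt_one.trans_le Fact.out).ne' hp
  rw [← Real.rpow_lt_rpow_iff (norm_nonneg _) hε.le hq]
  linarith [h.norm_rpow_add hp]

end Normed

section Chain

variable {A : Set (ellp p)}

def chainAtBot (A : Set (ellp p)) : Filter (ellp p) := ⨅ a ∈ A, 𝓟 {b ∈ A | Subvec b a}

theorem hasBasis_chainAtBot (hA : IsChain Subvec A) (hne : A.Nonempty) :
    (chainAtBot A).HasBasis (· ∈ A) fun a => {b ∈ A | Subvec b a} := by
  refine hasBasis_biInf_principal (fun a ha a' ha' => ?_) hne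
  rcases hA.total ha ha' with h | h
  · exact ⟨a, ha, subset_rfl, fun b hb => ⟨hb.1, hb.2.trans h⟩⟩
  · exact ⟨a', ha', fun b hb => ⟨hb.1, hb.2.trans h⟩, subset_rfl⟩

variable [Fact (1 ≤ p)]

theorem cauchy_chainAtBot (hp : p ≠ ∞) (hA : IsChain Subvec A) (hne : A.Nonempty) :
    Cauchy (chainAtBot A) := by
  have hB := hasBasis_chainAtBot hA hne
  refine Metric.cauchy_iff.2 ⟨hB.neBot_iff.2 fun ha => ⟨_, ha, Subvec.refl _⟩, fun ε hε => ?_⟩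
  have hbdd : BddBelow ((fun a : ellp p => ‖a‖ ^ p.toReal) '' A) :=
    ⟨0, by rintro _ ⟨b, -, rfl⟩; positivity⟩
  obtain ⟨_, ⟨a, ha, rfl⟩, hlt⟩ :=
    exists_lt_of_csInf_lt (hne.image fun a : ellp p => ‖a‖ ^ p.toReal)
    (lt_add_of_pos_right _ (Real.rpow_pos_of_pos hε p.toReal))
  have key : ∀ x ∈ {b ∈ A | Subvec b a}, ∀ y ∈ A, Subvec y x → dist x y < ε := by
    intro x hx y hy hyx
    rw [dist_eq_norm]
    refine hyx.norm_sub_lt hp hε ?_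
    linarith [hx.2.norm_rpow_le hp, csInf_le hbdd ⟨y, hy, rfl⟩]
  refine ⟨_, hB.mem_of_mem ha, fun x hx y hy => ?_⟩
  rcases hA.total hx.1 hy.1 with h | h
  · rw [dist_comm]
    exact key y hy x hx.1 h
  · exact key x hx y hy.1 h

theorem IsChain.exists_isSubvecGLB_tendsto (hp : p ≠ ∞) (hA : IsChain Subvec A)
    (hne : A.Nonempty) :
    ∃ g : ellp p, IsSubvecGLB g A ∧ ∀ ε > 0, ∃ a ∈ A, ∀ b ∈ A, Subvec b a → ‖b - g‖ < ε := by
  have hB := hasBasis_chainAtBot hA hne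
  have hcauchy := cauchy_chainAtBot hp hA hne
  have := hcauchy.1
  obtain ⟨g, hg⟩ := CompleteSpace.complete hcauchy
  have hlim : Tendsto id (chainAtBot A) (𝓝 g) := hg
  refine ⟨g, ⟨fun a ha => ?_, fun g' hg' => ?_⟩, fun ε hε => ?_⟩
  · exact (isClosed_setOf_subvec_left a).mem_of_tendsto hlim
      (mem_of_superset (hB.mem_of_mem ha) fun b hb => hb.2)
  · obtain ⟨a, ha⟩ := hne
    exact (isClosed_setOf_subvec_right g').mem_of_tendsto hlim
      (mem_of_superset (hB.mem_of_mem ha) fun b hb => hg' b hb.1)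
  · obtain ⟨a, ha, h⟩ := (hB.tendsto_iff Metric.nhds_basis_ball).1 hlim ε hε
    exact ⟨a, ha, fun b hb hba => by simpa [dist_eq_norm] using h b ⟨hb, hba⟩⟩

end Chain

theorem support_subsingleton_of_dense_span [Fact (1 ≤ p)] {s : Set (ellp p)}
    (hs : Dense (Submodule.span ℂ s : Set (ellp p))) {g : ellp p}
    (hg : ∀ x ∈ s, (∀ n, g n ≠ 0 → x n = g n) ∨ ∀ n, g n ≠ 0 → x n = 0) :
    {n | g n ≠ 0}.Subsingleton := by
  intro n hn m hm
  by_contra hnm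
  let T : ellp p →L[ℂ] ℂ := g m • lp.evalCLM ℂ _ p n - g n • lp.evalCLM ℂ _ p m
  have hT : T = 0 := ContinuousLinearMap.ext_on hs fun x hx => by
    rcases hg x hx with h | h
    · simp [T, lp.evalCLM, h n hn, h m hm, mul_comm]
    · simp [T, lp.evalCLM, h n hn, h m hm]
  have := congr($hT (lp.single p n 1))
  simp [T, lp.evalCLM, Ne.symm hnm] at this
  exact hm this

theorem eq_zero_or_exists_support_eq_singleton {g : ellp p} (hg : {n | g n ≠ 0}.Subsingleton) :
    g = 0 ∨ ∃ n, {m | g m ≠ 0} = {n} := by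
  refine hg.eq_empty_or_singleton.imp_left fun h => lp.ext (funext fun n => ?_)
  simpa using Set.eq_empty_iff_forall_notMem.1 h n

theorem ChildIn.not_prefix {S : Set (List ℕ)} {ν μ μ' : List ℕ} (h : ChildIn S ν μ)
    (h' : ChildIn S ν μ') (hne : μ ≠ μ') : ¬μ <+: μ' := fun hpre => by
  obtain ⟨-, a, rfl⟩ := h
  obtain ⟨-, b, rfl⟩ := h'
  exact hne (hpre.eq_of_length (by simp))

theorem ANMChain.exists_prefix_or_incomparable {S : Set (List ℕ)} {φ : List ℕ → ellp p}
    {C : Set (List ℕ)} (hC : ANMChain p S φ C) (hS : IsTree S) (hCne : C.Nonempty)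
    {μ : List ℕ} (hμ : μ ∈ S) :
    (∃ ν ∈ C, μ <+: ν) ∨ ∃ ν ∈ C, ¬μ <+: ν ∧ ¬ν <+: μ := by
  by_contra! h
  obtain ⟨hnot, hbelow⟩ := h
  have hC_le : ∀ ν ∈ C, ν <+: μ := fun ν hν => hbelow ν hν (hnot ν hν)
  have hCfin : C.Finite :=
    μ.inits.toFinset.finite_toSet.subset fun ν hν => by simpa using hC_le ν hν
  obtain ⟨ν₀, hν₀, hmax⟩ := Set.exists_max_image C List.length hCfin hCne
  obtain ⟨t, ht⟩ := hC_le ν₀ hν₀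
  cases t with
  | nil => exact hnot ν₀ hν₀ (by simp [← ht])
  | cons a t =>
    have hν₀S : Nonterminal S ν₀ := ⟨ν₀ ++ [a], hS μ hμ _ ⟨t, by simp [← ht]⟩, a, rfl⟩
    obtain ⟨_, hν', ⟨-, m, rfl⟩, -⟩ := hC.2.2 ν₀ hν₀ hν₀S
    simpa using hmax _ hν'

namespace Disintegration

variable [Fact (1 ≤ p)] {S : Set (List ℕ)} {φ : List ℕ → ellp p}

theorem subvec_of_childIn (hφ : Disintegration p S φ) {ν μ : List ℕ} (hν : ν ∈ S)
    (h : ChildIn S ν μ) : Subvec (φ μ) (φ ν) :=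
  subvec_of_hasSum (hφ.summative ν hν ⟨μ, h⟩)
    (fun c d hcd => hφ.separating _ c.2.1 _ d.2.1
      (c.2.not_prefix d.2 (Subtype.coe_injective.ne hcd))
      (d.2.not_prefix c.2 (Subtype.coe_injective.ne hcd.symm)))
    ⟨μ, h⟩

theorem subvec_of_prefix (hφ : Disintegration p S φ) {ν μ : List ℕ} (hν : ν ∈ S) (hμ : μ ∈ S)
    (h : ν <+: μ) : Subvec (φ μ) (φ ν) := by
  obtain ⟨t, rfl⟩ := h
  induction t generalizing ν with
  | nil => simpa using Subvec.refl (φ ν)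
  | cons a t ih =>
    have hc : ν ++ [a] ∈ S := hφ.tree _ hμ _ ⟨t, by simp⟩
    simpa using (ih hc (by simpa using hμ)).trans (hφ.subvec_of_childIn hν ⟨hc, a, rfl⟩)

end Disintegration

theorem stmt_10_general (p : ℝ≥0∞) [Fact (1 ≤ p)] (hptop : p ≠ ∞)
    (S : Set (List ℕ)) (φ : List ℕ → ellp p) (hφ : Disintegration p S φ)
    (C : Set (List ℕ)) (hC : ANMChain p S φ C) (hCne : C.Nonempty) :
    ∃ g : ellp p, IsSubvecGLB g (φ '' C) ∧
      (g = 0 ∨ ∃ n : ℕ, {m : ℕ | g m ≠ 0} = {n}) ∧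
      ∀ ε : ℝ, 0 < ε → ∃ ν ∈ C, ∀ ν' ∈ C, ν <+: ν' → ‖φ ν' - g‖ < ε := by
  have hsubvec {ν μ} (hν : ν ∈ C) (hμ : μ ∈ C) (h : ν <+: μ) : Subvec (φ μ) (φ ν) :=
    hφ.subvec_of_prefix (hC.1 hν) (hC.1 hμ) h
  have hA : IsChain Subvec (φ '' C) := by
    rintro _ ⟨ν, hν, rfl⟩ _ ⟨μ, hμ, rfl⟩ -
    exact (hC.2.1 ν hν μ hμ).symm.imp (hsubvec hμ hν) (hsubvec hν hμ)
  obtain ⟨g, hglb, hlim⟩ := hA.exists_isSubvecGLB_tendsto hptop (hCne.image φ)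
  have hg {ν} (hν : ν ∈ C) : Subvec g (φ ν) := hglb.1 _ ⟨ν, hν, rfl⟩
  refine ⟨g, hglb, eq_zero_or_exists_support_eq_singleton <|
    support_subsingleton_of_dense_span hφ.dense ?_, fun ε hε => ?_⟩
  · rintro _ ⟨μ, hμ, rfl⟩
    rcases hC.exists_prefix_or_incomparable hφ.tree hCne hμ with ⟨ν, hν, hpre⟩ | ⟨ν, hν, h₁, h₂⟩
    · exact Or.inl fun n hn =>
        (((hg hν).trans (hφ.subvec_of_prefix hμ (hC.1 hν) hpre)).apply_eq hn).symm
    · exact Or.inr fun n hn => (hφ.separating μ hμ ν (hC.1 hν) h₁ h₂ n).resolve_right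
        ((hg hν).apply_eq hn ▸ hn)
  · obtain ⟨_, ⟨ν, hν, rfl⟩, h⟩ := hlim ε hε
    exact ⟨ν, hν, fun ν' hν' hpre => h _ ⟨ν', hν', rfl⟩ (hsubvec hν hν' hpre)⟩

/-- along an almost norm-maximizing chain of a disintegration, the
⪯-infimum exists, is `0` or an atom, and is the norm limit of `φ(ν)`. -/
theorem stmt_10 (p : ℝ≥0∞) [Fact (1 ≤ p)] (hptop : p ≠ ∞) (hp2 : p ≠ 2)
    (S : Set (List ℕ)) (φ : List ℕ → ellp p) (hφ : Disintegration p S φ)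
    (C : Set (List ℕ)) (hC : ANMChain p S φ C) (hCne : C.Nonempty) :
    ∃ g : ellp p, IsSubvecGLB g (φ '' C) ∧
      (g = 0 ∨ ∃ n : ℕ, {m : ℕ | g m ≠ 0} = {n}) ∧
      ∀ ε : ℝ, 0 < ε → ∃ ν ∈ C, ∀ ν' ∈ C, ν <+: ν' → ‖φ ν' - g‖ < ε :=
  stmt_10_general p hptop S φ hφ C hC hCne
end
end

section
/- Let C ⊆ ℕ and define R : ℕ → ℓᵖ by R(2k) = e_{2k} + e_{2k+1} and R(2k+1) = e_{2 c_k}, where {c_k} enumerates C injectively. Let 𝓑 be the closed linear span of ran(R). Then for every k ∈ ℕ: k ∈ C iff e_{2k} ∈ 𝓑 iff e_{2k+1} ∈ 𝓑, and e_{2k} + e_{2k+1} ∈ 𝓑 for all k. -/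
open scoped ENNReal
open Filter

noncomputable section

/-!
The continuous functional `f ↦ f (2k) - f (2k+1)` vanishes on every `R (2j) = e_{2j} + e_{2j+1}`,
and on `R (2j+1) = e_{2 c_j}` unless `c_j = k`. So for `k ∉ C` it vanishes on `𝓑`, while it
is `±1` on `e_{2k}` and `e_{2k+1}`. For `k = c_j`, `e_{2k} = R (2j+1)` and
`e_{2k+1} = R (2k) - e_{2k}`.
-/

theorem Submodule.topologicalClosure_span_le_ker {R M N : Type*} [Semiring R]
    [AddCommMonoid M] [Module R M] [TopologicalSpace M] [ContinuousAdd M]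
    [ContinuousConstSMul R M] [AddCommMonoid N] [Module R N] [TopologicalSpace N] [T1Space N]
    (φ : M →L[R] N) {s : Set M} (hs : ∀ x ∈ s, φ x = 0) :
    (span R s).topologicalClosure ≤ LinearMap.ker (φ : M →ₗ[R] N) :=
  topologicalClosure_minimal _ (span_le.mpr hs) φ.isClosed_ker

theorem stdb_apply (p : ℝ≥0∞) (n m : ℕ) : stdb p n m = if m = n then 1 else 0 := by
  simp [stdb, lp.single_apply, Pi.single_apply]

def pairDiff (p : ℝ≥0∞) [Fact (1 ≤ p)] (k : ℕ) : ellp p →L[ℂ] ℂ :=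
  lp.evalCLM ℂ (fun _ : ℕ => ℂ) p (2 * k) - lp.evalCLM ℂ (fun _ : ℕ => ℂ) p (2 * k + 1)

section pairDiff

variable {p : ℝ≥0∞} [Fact (1 ≤ p)]

theorem pairDiff_apply (k : ℕ) (f : ellp p) : pairDiff p k f = f (2 * k) - f (2 * k + 1) := by
  simp [pairDiff, lp.evalCLM]

theorem pairDiff_stdb_even (k m : ℕ) :
    pairDiff p k (stdb p (2 * m)) = if m = k then 1 else 0 := by
  simp only [pairDiff_apply, stdb_apply]
  split_ifs <;> first | omega | simp

theorem pairDiff_stdb_odd (k m : ℕ) :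
    pairDiff p k (stdb p (2 * m + 1)) = if m = k then -1 else 0 := by
  simp only [pairDiff_apply, stdb_apply]
  split_ifs <;> first | omega | simp

theorem pairDiff_stdb_even_add_odd (k m : ℕ) :
    pairDiff p k (stdb p (2 * m) + stdb p (2 * m + 1)) = 0 := by
  rw [map_add, pairDiff_stdb_even, pairDiff_stdb_odd]
  split_ifs <;> simp

end pairDiff

theorem stmt_18_general (p : ℝ≥0∞) [Fact (1 ≤ p)]
    (C : Set ℕ) (c : ℕ → ℕ)
    (hcrange : Set.range c = C)
    (R : ℕ → ellp p)
    (hReven : ∀ k, R (2 * k) = stdb p (2 * k) + stdb p (2 * k + 1))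
    (hRodd : ∀ k, R (2 * k + 1) = stdb p (2 * c k))
    (B : Submodule ℂ (ellp p))
    (hB : B = (Submodule.span ℂ (Set.range R)).topologicalClosure) :
    ∀ k : ℕ, (k ∈ C ↔ stdb p (2 * k) ∈ B) ∧
      (k ∈ C ↔ stdb p (2 * k + 1) ∈ B) ∧
      stdb p (2 * k) + stdb p (2 * k + 1) ∈ B := by
  intro k
  subst hcrange
  have hR_mem (n : ℕ) : R n ∈ B :=
    hB ▸ Submodule.le_topologicalClosure _ (Submodule.subset_span ⟨n, rfl⟩)
  have hpair := hReven k ▸ hR_mem (2 * k)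
  have heven : k ∈ Set.range c → stdb p (2 * k) ∈ B := by
    rintro ⟨j, rfl⟩
    exact hRodd j ▸ hR_mem (2 * j + 1)
  have hodd (hk : k ∈ Set.range c) : stdb p (2 * k + 1) ∈ B := by
    simpa using B.sub_mem hpair (heven hk)
  have hconv {f : ellp p} (hf : pairDiff p k f ≠ 0) (hfB : f ∈ B) : k ∈ Set.range c := by
    by_contra hk
    refine hf (Submodule.topologicalClosure_span_le_ker (pairDiff p k) ?_ (hB ▸ hfB))
    rintro _ ⟨n, rfl⟩
    obtain ⟨j, rfl | rfl⟩ := Nat.even_or_odd' n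
    · rw [hReven, pairDiff_stdb_even_add_odd]
    · rw [hRodd, pairDiff_stdb_even, if_neg fun hj => hk ⟨j, hj⟩]
  exact ⟨⟨heven, hconv (by simp [pairDiff_stdb_even])⟩,
    ⟨hodd, hconv (by simp [pairDiff_stdb_odd])⟩, hpair⟩

/-- membership of basis vectors in the closed linear span of the
sequence `R` coding the set `C`. -/
theorem stmt_18 (p : ℝ≥0∞) [Fact (1 ≤ p)] (hptop : p ≠ ∞)
    (C : Set ℕ) (c : ℕ → ℕ) (hcinj : Function.Injective c)
    (hcrange : Set.range c = C)
    (R : ℕ → ellp p)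
    (hReven : ∀ k, R (2 * k) = stdb p (2 * k) + stdb p (2 * k + 1))
    (hRodd : ∀ k, R (2 * k + 1) = stdb p (2 * c k))
    (B : Submodule ℂ (ellp p))
    (hB : B = (Submodule.span ℂ (Set.range R)).topologicalClosure) :
    ∀ k : ℕ, (k ∈ C ↔ stdb p (2 * k) ∈ B) ∧
      (k ∈ C ↔ stdb p (2 * k + 1) ∈ B) ∧
      stdb p (2 * k) + stdb p (2 * k + 1) ∈ B :=
  stmt_18_general p C c hcrange R hReven hRodd B hB
end
end

section
/- Let 1 ≤ p < ∞, p ≠ 2, and let 𝓑 ⊆ ℓᵖ be the closed linear span of {e_{2k} + e_{2k+1} : k ∈ ℕ} ∪ {e_{2k}, e_{2k+1} : k ∈ C} for a set C ⊆ ℕ. Then every atom of the subvector ordering of 𝓑 is either a nonzero scalar multiple of e_{2k} + e_{2k+1} for some k ∉ C, or a nonzero scalar multiple of e_{2k+j} for some k ∈ C and j ∈ {0,1}. -/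
open scoped ENNReal
open Filter

noncomputable section

/-!
Every vector of the span of the generators has equal coordinates `2k` and `2k + 1` whenever
`k ∉ C`, and this closed condition passes to `𝓑`. Hence if an atom `f` has `f n ≠ 0` with
`n ∈ {2k, 2k + 1}`, the restriction of `f` to `{n}` (if `k ∈ C`) or to `{2k, 2k + 1}`
(if `k ∉ C`) is a nonzero multiple of a generator, so it lies in `𝓑` and is a nonzero
subvector of `f`; by atomicity it is `f` itself.
-/

lemma smul_stdb_eq_indicator {p : ℝ≥0∞} (f : ellp p) (n : ℕ) :
    ⇑(f n • stdb p n) = ({n} : Set ℕ).indicator f := by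
  ext m
  by_cases h : m = n
  · subst h; simp [stdb]
  · simp [stdb, h]

lemma smul_stdb_add_stdb_eq_indicator {p : ℝ≥0∞} (f : ellp p) {m n : ℕ} (hmn : m ≠ n)
    (hf : f m = f n) : ⇑(f m • (stdb p m + stdb p n)) = ({m, n} : Set ℕ).indicator f := by
  ext i
  simp only [lp.coeFn_smul, lp.coeFn_add, Pi.smul_apply, Pi.add_apply, stdb, lp.single_apply,
    Pi.single_apply, Set.indicator, Set.mem_insert_iff, Set.mem_singleton_iff]
  by_cases him : i = m
  · simp [him, hmn]
  · by_cases hin : i = n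
    · simp [hin, Ne.symm hmn, hf]
    · simp [him, hin]

lemma eq_of_subvec_of_atom {p : ℝ≥0∞} {B : Submodule ℂ (ellp p)} {f g : ellp p}
    (hatom : ∀ g : ellp p, g ∈ B → Subvec g f → g = 0 ∨ g = f) (hgB : g ∈ B)
    {A : Set ℕ} (hg : ⇑g = A.indicator f) {n : ℕ} (hnA : n ∈ A) (hn : f n ≠ 0) : f = g := by
  refine ((hatom g hgB ⟨A, hg⟩).resolve_left fun hg0 => hn ?_).symm
  simpa [hg0, Set.indicator_of_mem hnA] using (congrFun hg n).symm

def eqOnPairsOff (p : ℝ≥0∞) (C : Set ℕ) : Submodule ℂ (ellp p) where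
  carrier := {f | ∀ k ∉ C, f (2 * k) = f (2 * k + 1)}
  add_mem' ha hb k hk := by simp [ha k hk, hb k hk]
  zero_mem' _ _ := rfl
  smul_mem' c _ ha k hk := by simp [ha k hk]

lemma isClosed_eqOnPairsOff (p : ℝ≥0∞) [Fact (1 ≤ p)] (C : Set ℕ) :
    IsClosed (eqOnPairsOff p C : Set (ellp p)) := by
  show IsClosed {f : ellp p | ∀ k ∉ C, f (2 * k) = f (2 * k + 1)}
  simp only [Set.ofPred_forall]
  exact isClosed_iInter fun k => isClosed_iInter fun _ =>
    isClosed_eq (lp.lipschitzWith_one_eval p _).continuous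
      (lp.lipschitzWith_one_eval p _).continuous

lemma span_le_eqOnPairsOff (p : ℝ≥0∞) (C : Set ℕ) :
    Submodule.span ℂ
      ({f : ellp p | ∃ k : ℕ, f = stdb p (2 * k) + stdb p (2 * k + 1)} ∪
       {f : ellp p | ∃ k ∈ C, f = stdb p (2 * k) ∨ f = stdb p (2 * k + 1)}) ≤
      eqOnPairsOff p C := by
  rw [Submodule.span_le]
  rintro g (⟨k, rfl⟩ | ⟨k, hkC, rfl | rfl⟩) j hj <;>
  · have hodd₁ : 2 * j ≠ 2 * k + 1 := by omega
    have hodd₂ : 2 * j + 1 ≠ 2 * k := by omega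
    by_cases hjk : j = k
    · subst hjk; simp_all [stdb]
    · simp [stdb, hjk, hodd₁, hodd₂]

theorem stmt_19_general (p : ℝ≥0∞) [Fact (1 ≤ p)]
    (C : Set ℕ)
    (B : Submodule ℂ (ellp p))
    (hB : B = (Submodule.span ℂ
      ({f : ellp p | ∃ k : ℕ, f = stdb p (2 * k) + stdb p (2 * k + 1)} ∪
       {f : ellp p | ∃ k ∈ C, f = stdb p (2 * k) ∨ f = stdb p (2 * k + 1)})).topologicalClosure)
    (f : ellp p) (hfB : (f : ellp p) ∈ B) (hfnz : f ≠ 0)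
    (hatom : ∀ g : ellp p, g ∈ B → Subvec g f → g = 0 ∨ g = f) :
    (∃ k : ℕ, k ∉ C ∧ ∃ a : ℂ, a ≠ 0 ∧
        f = a • (stdb p (2 * k) + stdb p (2 * k + 1))) ∨
    (∃ k ∈ C, ∃ a : ℂ, a ≠ 0 ∧
        (f = a • stdb p (2 * k) ∨ f = a • stdb p (2 * k + 1))) := by
  obtain ⟨n, hn⟩ : ∃ n, f n ≠ 0 := by
    by_contra! h
    exact hfnz (lp.ext (funext h))
  have hgen_mem {g : ellp p} (hg : g ∈ _) : g ∈ B :=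
    hB ▸ Submodule.le_topologicalClosure _ (Submodule.subset_span hg)
  obtain ⟨k, hk⟩ := Nat.even_or_odd' n
  by_cases hkC : k ∈ C
  · have hfn : f = f n • stdb p n :=
      eq_of_subvec_of_atom hatom
        (B.smul_mem _ (hgen_mem (Or.inr ⟨k, hkC, hk.imp (congrArg _) (congrArg _)⟩)))
        (smul_stdb_eq_indicator f n) rfl hn
    refine Or.inr ⟨k, hkC, f n, hn, ?_⟩
    rcases hk with rfl | rfl
    exacts [Or.inl hfn, Or.inr hfn]
  · have hpair : f (2 * k) = f (2 * k + 1) :=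
      Submodule.topologicalClosure_minimal _ (span_le_eqOnPairsOff p C)
        (isClosed_eqOnPairsOff p C) (hB ▸ hfB) k hkC
    have h2k : f (2 * k) ≠ 0 := by
      rcases hk with rfl | rfl
      exacts [hn, hpair ▸ hn]
    exact Or.inl ⟨k, hkC, f (2 * k), h2k, eq_of_subvec_of_atom hatom
      (B.smul_mem _ (hgen_mem (Or.inl ⟨k, rfl⟩)))
      (smul_stdb_add_stdb_eq_indicator f (by omega) hpair) (Set.mem_insert _ _) h2k⟩

/-- classification of the atoms of the subvector ordering of the
subspace `𝓑` of `ℓᵖ` determined by `C`. -/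
theorem stmt_19 (p : ℝ≥0∞) [Fact (1 ≤ p)] (hptop : p ≠ ∞) (hp2 : p ≠ 2)
    (C : Set ℕ)
    (B : Submodule ℂ (ellp p))
    (hB : B = (Submodule.span ℂ
      ({f : ellp p | ∃ k : ℕ, f = stdb p (2 * k) + stdb p (2 * k + 1)} ∪
       {f : ellp p | ∃ k ∈ C, f = stdb p (2 * k) ∨ f = stdb p (2 * k + 1)})).topologicalClosure)
    (f : ellp p) (hfB : (f : ellp p) ∈ B) (hfnz : f ≠ 0)
    (hatom : ∀ g : ellp p, g ∈ B → Subvec g f → g = 0 ∨ g = f) :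
    (∃ k : ℕ, k ∉ C ∧ ∃ a : ℂ, a ≠ 0 ∧
        f = a • (stdb p (2 * k) + stdb p (2 * k + 1))) ∨
    (∃ k ∈ C, ∃ a : ℂ, a ≠ 0 ∧
        (f = a • stdb p (2 * k) ∨ f = a • stdb p (2 * k + 1))) :=
  stmt_19_general p C B hB f hfB hfnz hatom
end
end
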